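/- Let M be a Markov chain with n = |S| states, targets T, and weight function w : T → [0,∞), in which every state can reach T along edges; let s ∉ T and γ ≥ 0. Let f : S → ℝ be any vector with f ≤ val_{M[s=γ]} pointwise, where val_{M[s=γ]} is the weighted reachability value vector of the reduced MC M[s = γ], and set γ' := ∑_{s'} δ(s,s') f(s'). Then for every ε > 0 with γ − ε ≥ 0: if γ' + p_min^n · ε > γ, then val_M(s) > γ − ε, where val_M is the weighted reachability value vector of M. -/

import Mathlib

/-- A finite Markov chain: transition function `δ` (nonnegative, rows sum to 1)
together with a set `T` of absorbing target states. There is an edge `s → s'`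
iff `δ s s' > 0`. -/
structure MC (S : Type) [Fintype S] [DecidableEq S] where
  δ : S → S → ℝ
  T : Finset S
  nonneg : ∀ s s' : S, 0 ≤ δ s s'
  rowsum : ∀ s : S, ∑ s' : S, δ s s' = 1
  absorbing : ∀ t ∈ T, δ t t = 1

variable {S : Type} [Fintype S] [DecidableEq S]

/-- Edge relation of a Markov chain: `s → s'` iff `δ s s' > 0`. -/
def MC.edge (M : MC S) (a b : S) : Prop := 0 < M.δ a b

/-- `pathLen r n a b`: there is a path of length `n` from `a` to `b` along `r`. -/
def pathLen (r : S → S → Prop) : ℕ → S → S → Prop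
  | 0 => fun a b => a = b
  | n + 1 => fun a c => ∃ b, r a b ∧ pathLen r n b c

/-- `reaches r A s`: `s` can reach the set `A` along the relation `r`. -/
def reaches (r : S → S → Prop) (A : Set S) (s : S) : Prop :=
  ∃ n, ∃ a ∈ A, pathLen r n s a

/-- Length of a shortest path from `s` to the set `A` along `r`. -/
noncomputable def distTo (r : S → S → Prop) (A : Set S) (s : S) : ℕ :=
  sInf {n | ∃ a ∈ A, pathLen r n s a}

/-- Level `0`: the targets together with all states that cannot reach the targets. -/
def MC.level0 (M : MC S) : Set S :=
  {s | s ∈ M.T ∨ ¬ reaches M.edge (M.T : Set S) s}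

/-- The levels of a Markov chain: `ℓ_0` is `level0`, and for `i ≥ 1`, `ℓ_i` is the
set of states whose shortest edge-path distance to `ℓ_0` is exactly `i`. -/
noncomputable def MC.levelSet (M : MC S) : ℕ → Set S
  | 0 => M.level0
  | i + 1 => {s | distTo M.edge M.level0 s = i + 1}

/-- `M` has (exactly) `k` levels: `ℓ_k` is the last nonempty level. -/
def MC.hasLevels (M : MC S) (k : ℕ) : Prop :=
  (M.levelSet k).Nonempty ∧ ∀ i, k < i → M.levelSet i = ∅

/-- One-step transition matrix of the Markov chain. -/
noncomputable def MC.P (M : MC S) : Matrix S S ℝ := Matrix.of M.δ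

/-- Weighted reachability value `val(s) = E_s[w(X_{t*}) · 1{t* < ∞}]`, where `t*` is
the first hitting time of `T`. Since `T` is absorbing, this equals the supremum
(monotone limit) over `n` of `∑_{t ∈ T} (δⁿ)(s,t)·w(t)`. -/
noncomputable def MC.reachVal (M : MC S) (w : S → ℝ) (s : S) : ℝ :=
  ⨆ n : ℕ, ∑ t ∈ M.T, (M.P ^ n) s t * w t

/-- Stochastic shortest path value `val(s) = E_s[∑_{t=0}^{t*} w(X_t)]`, where `t*` is
the first hitting time of `T`: the expected weight collected strictly before `T`
(states outside `T`, counted via the `n`-step distributions) plus the expected weight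
of the first target state hit. -/
noncomputable def MC.sspVal (M : MC S) (w : S → ℝ) (s : S) : ℝ :=
  (∑' n : ℕ, ∑ s' ∈ Finset.univ.filter (fun x => x ∉ M.T), (M.P ^ n) s s' * w s')
    + M.reachVal w s

/-- Smallest positive transition probability of the Markov chain. -/
noncomputable def MC.pmin (M : MC S) : ℝ :=
  sInf {p : ℝ | 0 < p ∧ ∃ s s' : S, M.δ s s' = p}

/-- Reachability Bellman update. -/
noncomputable def MC.reachUpdate (M : MC S) (w : S → ℝ) (v : S → ℝ) : S → ℝ :=
  fun s => if s ∈ M.T then w s else ∑ s' : S, M.δ s s' * v s'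

/-- SSP Bellman update. -/
noncomputable def MC.sspUpdate (M : MC S) (w : S → ℝ) (v : S → ℝ) : S → ℝ :=
  fun s => if s ∈ M.T then w s else w s + ∑ s' : S, M.δ s s' * v s'

/-- The reduced Markov chain `M[s = ·]`: the state `s` is made absorbing (its row of
`δ` replaced by the point mass at `s`) and added to the target set. -/
def MC.reduce (M : MC S) (s : S) : MC S where
  δ := fun a b => if a = s then (if b = s then 1 else 0) else M.δ a b
  T := insert s M.T
  nonneg := by
    intro a b
    by_cases h : a = s
    · by_cases h' : b = s <;> simp [h, h']
    · simpa [h] using M.nonneg a b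
  rowsum := by
    intro a
    by_cases h : a = s
    · simp [h]
    · simpa [h] using M.rowsum a
  absorbing := by
    intro t ht
    rcases Finset.mem_insert.mp ht with h | h
    · simp [h]
    · by_cases h' : t = s
      · simp [h']
      · simpa [h'] using M.absorbing t h

/-- Probability, in `M`, of ever visiting the state `s` when starting from `a`,
i.e. `P_a(∃ t ≥ 0, X_t = s)` (computed as a reachability value after making `s`
absorbing, which does not change the dynamics before the first visit to `s`). -/
noncomputable def MC.hitProb (M : MC S) (a s : S) : ℝ :=
  (M.reduce s).reachVal (fun b => if b = s then 1 else 0) a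

/-- Probability of having reached `T` within `i` steps, `P_s(∃ t ≤ i, X_t ∈ T)`;
since `T` is absorbing this equals `∑_{t ∈ T} (δ^i)(s,t)`. -/
noncomputable def MC.hitBy (M : MC S) (s : S) (i : ℕ) : ℝ :=
  ∑ t ∈ M.T, (M.P ^ i) s t

/-!
Let `u` be the value vector of `M[s = γ]` and `q b` the probability of visiting `s` from `b`
before `T`. Both are harmonic off `T ∪ {s}`, so if `γ ≤ ∑ δ(s,b) u(b) + c·e`, where
`e = ∑ δ(s,b) (1 - q b)` is the probability of escaping from `s` to `T` without returning,
then `u - c q` is subharmonic off `T` and equals `w` on `T`. Every state reaches `T`, so by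
the maximum principle `u - c q ≤ val_M`, and at `s` this reads `γ - c ≤ val_M(s)`.
A shortest path from `s` to `T` never returns to `s`, whence `e ≥ p_min^n`; the hypothesis
then makes `c = (γ - γ') / e < ε` admissible.
-/

open Finset Matrix

section Paths

variable {V : Type} {r : V → V → Prop} {A : Set V} {a b s : V}

theorem reaches.exists_pathLen_distTo (h : reaches r A a) :
    ∃ b ∈ A, pathLen r (distTo r A a) a b :=
  Nat.sInf_mem h

theorem distTo_le_of_pathLen {n : ℕ} (hb : b ∈ A) (h : pathLen r n a b) : distTo r A a ≤ n :=
  Nat.sInf_le ⟨b, hb, h⟩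

theorem reaches.mem_of_distTo_eq_zero (h : reaches r A a) (h0 : distTo r A a = 0) : a ∈ A := by
  obtain ⟨b, hb, hab⟩ := h.exists_pathLen_distTo
  rw [h0] at hab
  exact hab ▸ hb

theorem reaches.exists_rel_distTo_add_one (h : reaches r A a) (hpos : distTo r A a ≠ 0) :
    ∃ b, r a b ∧ reaches r A b ∧ distTo r A b + 1 = distTo r A a := by
  obtain ⟨t, ht, hat⟩ := h.exists_pathLen_distTo
  obtain ⟨m, hm⟩ := Nat.exists_eq_succ_of_ne_zero hpos
  rw [hm] at hat
  obtain ⟨b, hab, hbt⟩ := hat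
  have hb : reaches r A b := ⟨m, t, ht, hbt⟩
  obtain ⟨t', ht', hbt'⟩ := hb.exists_pathLen_distTo
  have hle_b := distTo_le_of_pathLen ht hbt
  have hle_a := distTo_le_of_pathLen ht'
    (show pathLen r (distTo r A b + 1) a t' from ⟨b, hab, hbt'⟩)
  exact ⟨b, hab, hb, by omega⟩

theorem reaches.exists_distTo_eq (h : reaches r A a) {j : ℕ} (hj : j ≤ distTo r A a) :
    ∃ b, distTo r A b = j := by
  obtain ⟨k, hk⟩ := Nat.exists_eq_add_of_le hj
  induction k generalizing a with
  | zero => exact ⟨a, hk⟩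
  | succ k ih =>
    obtain ⟨b, -, hb, hba⟩ := h.exists_rel_distTo_add_one (by omega)
    exact ih hb (by omega) (by omega)

theorem reaches.distTo_lt_card [Fintype V] [DecidableEq V] (h : reaches r A a) :
    distTo r A a < Fintype.card V :=
  calc distTo r A a < #(range (distTo r A a + 1)) := by simp
    _ ≤ #(univ.image (distTo r A)) := card_le_card fun j hj => by
      simpa using h.exists_distTo_eq (Nat.lt_succ_iff.mp (mem_range.mp hj))
    _ ≤ Fintype.card V := card_image_le

/-- A shortest path from `a` only visits states closer to `A` than `s`, so it avoids `s`. -/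
theorem reaches.exists_pathLen_avoiding (h : reaches r A a) (hlt : distTo r A a < distTo r A s) :
    ∃ b ∈ A, pathLen (fun x y => r x y ∧ x ≠ s) (distTo r A a) a b := by
  obtain ⟨k, hk⟩ : ∃ k, distTo r A a = k := ⟨_, rfl⟩
  rw [hk] at hlt ⊢
  induction k generalizing a with
  | zero =>
    obtain ⟨b, hb, hab⟩ := h.exists_pathLen_distTo
    rw [hk] at hab
    exact ⟨b, hb, hab⟩
  | succ k ih =>
    obtain ⟨b, hab, hb, hba⟩ := h.exists_rel_distTo_add_one (by omega)
    obtain ⟨t, ht, hbt⟩ := ih hb (by omega) (by omega)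
    exact ⟨t, ht, b, ⟨hab, by rintro rfl; omega⟩, hbt⟩

end Paths

namespace MC

section Value

variable (N : MC S)

theorem P_mem_rowStochastic : N.P ∈ rowStochastic ℝ S :=
  mem_rowStochastic_iff_sum.2 ⟨N.nonneg, N.rowsum⟩

theorem P_pow_apply_nonneg (n : ℕ) (a b : S) : 0 ≤ (N.P ^ n) a b :=
  nonneg_of_mem_rowStochastic (pow_mem N.P_mem_rowStochastic n)

theorem δ_le_one (a b : S) : N.δ a b ≤ 1 :=
  le_one_of_mem_rowStochastic N.P_mem_rowStochastic

theorem pmin_nonneg : 0 ≤ N.pmin :=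
  Real.sInf_nonneg fun _ hp => hp.1.le

theorem pmin_le {a b : S} (h : N.edge a b) : N.pmin ≤ N.δ a b :=
  csInf_le ⟨0, fun _ hp => hp.1.le⟩ ⟨h, a, b, rfl⟩

theorem pmin_pos [Nonempty S] : 0 < N.pmin := by
  obtain ⟨a⟩ := ‹Nonempty S›
  obtain ⟨b, -, hab⟩ :=
    exists_lt_of_sum_lt (by simp [N.rowsum a] : ∑ _b : S, (0 : ℝ) < ∑ b, N.δ a b)
  have hne : {p : ℝ | 0 < p ∧ ∃ s s' : S, N.δ s s' = p}.Nonempty := ⟨_, hab, a, b, rfl⟩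
  have hfin : {p : ℝ | 0 < p ∧ ∃ s s' : S, N.δ s s' = p}.Finite :=
    (Set.finite_range (Function.uncurry N.δ)).subset fun _ ⟨_, s, s', hp⟩ => ⟨(s, s'), hp⟩
  exact (hne.csInf_mem hfin).1

theorem δ_eq_zero_of_mem_T {t b : S} (ht : t ∈ N.T) (hb : b ≠ t) : N.δ t b = 0 := by
  have hrow := N.rowsum t
  rw [← add_sum_erase _ _ (mem_univ t), N.absorbing t ht] at hrow
  exact (sum_eq_zero_iff_of_nonneg fun c _ => N.nonneg t c).1 (by linarith) b
    (mem_erase.2 ⟨hb, mem_univ b⟩)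

theorem P_pow_apply_of_mem_T {t : S} (ht : t ∈ N.T) (n : ℕ) (b : S) :
    (N.P ^ n) t b = (1 : Matrix S S ℝ) t b := by
  induction n with
  | zero => rfl
  | succ n ih =>
    rw [pow_succ', mul_apply, sum_eq_single t, ← ih]
    · simp [P, N.absorbing t ht]
    · intro c _ hc
      simp [P, N.δ_eq_zero_of_mem_T ht hc]
    · simp

theorem monotone_P_pow_apply_of_mem_T {t : S} (ht : t ∈ N.T) (a : S) :
    Monotone fun n => (N.P ^ n) a t := by
  refine monotone_nat_of_le_succ fun n => ?_
  rw [pow_succ N.P, mul_apply]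
  calc (N.P ^ n) a t = (N.P ^ n) a t * N.P t t := by simp [P, N.absorbing t ht]
    _ ≤ ∑ c, (N.P ^ n) a c * N.P c t :=
      single_le_sum (f := fun c => (N.P ^ n) a c * N.P c t)
        (fun c _ => mul_nonneg (N.P_pow_apply_nonneg n a c) (N.nonneg c t)) (mem_univ t)

theorem pow_le_P_pow_apply_of_pathLen {r : S → S → Prop} {c : ℝ} (hc : 0 ≤ c)
    (hr : ∀ x y, r x y → c ≤ N.δ x y) {m : ℕ} {a b : S} (h : pathLen r m a b) :
    c ^ m ≤ (N.P ^ m) a b := by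
  induction m generalizing a with
  | zero =>
    subst h
    simp
  | succ m ih =>
    obtain ⟨x, hax, hxb⟩ := h
    rw [pow_succ' N.P, mul_apply]
    calc c ^ (m + 1) = c * c ^ m := pow_succ' c m
      _ ≤ N.P a x * (N.P ^ m) x b :=
        mul_le_mul (hr a x hax) (ih hxb) (pow_nonneg hc m) (N.nonneg a x)
      _ ≤ ∑ y, N.P a y * (N.P ^ m) y b :=
        single_le_sum (f := fun y => N.P a y * (N.P ^ m) y b)
          (fun y _ => mul_nonneg (N.nonneg a y) (N.P_pow_apply_nonneg m y b)) (mem_univ x)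

noncomputable def reachValTrunc (w : S → ℝ) (n : ℕ) (a : S) : ℝ :=
  ∑ t ∈ N.T, (N.P ^ n) a t * w t

theorem reachValTrunc_succ (w : S → ℝ) (n : ℕ) (a : S) :
    N.reachValTrunc w (n + 1) a = ∑ b, N.δ a b * N.reachValTrunc w n b := by
  simp only [reachValTrunc, pow_succ' N.P, mul_apply, sum_mul, mul_sum]
  rw [sum_comm]
  refine sum_congr rfl fun b _ => sum_congr rfl fun t _ => ?_
  simp only [P, of_apply]
  ring

variable {N} {w : S → ℝ}

theorem monotone_reachValTrunc (hw : ∀ t ∈ N.T, 0 ≤ w t) (a : S) :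
    Monotone fun n => N.reachValTrunc w n a := fun _ _ hmn =>
  sum_le_sum fun t ht =>
    mul_le_mul_of_nonneg_right (N.monotone_P_pow_apply_of_mem_T ht a hmn) (hw t ht)

theorem reachValTrunc_le_sum (hw : ∀ t ∈ N.T, 0 ≤ w t) (n : ℕ) (a : S) :
    N.reachValTrunc w n a ≤ ∑ t ∈ N.T, w t :=
  sum_le_sum fun t ht => mul_le_of_le_one_left (hw t ht)
    (le_one_of_mem_rowStochastic (pow_mem N.P_mem_rowStochastic n))

theorem tendsto_reachValTrunc (hw : ∀ t ∈ N.T, 0 ≤ w t) (a : S) :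
    Filter.Tendsto (fun n => N.reachValTrunc w n a) Filter.atTop (nhds (N.reachVal w a)) :=
  tendsto_atTop_ciSup (monotone_reachValTrunc hw a)
    ⟨_, Set.forall_mem_range.2 fun n => reachValTrunc_le_sum hw n a⟩

theorem reachVal_eq_sum (hw : ∀ t ∈ N.T, 0 ≤ w t) (a : S) :
    N.reachVal w a = ∑ b, N.δ a b * N.reachVal w b := by
  refine tendsto_nhds_unique
    ((Filter.tendsto_add_atTop_iff_nat 1).2 (tendsto_reachValTrunc hw a)) ?_
  simp only [reachValTrunc_succ]
  exact tendsto_finsetSum _ fun b _ => (tendsto_reachValTrunc hw b).const_mul _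

theorem reachVal_of_mem_T (w : S → ℝ) {t : S} (ht : t ∈ N.T) : N.reachVal w t = w t := by
  simp [reachVal, N.P_pow_apply_of_mem_T ht, one_apply, ht]

theorem reachVal_le_one (hw1 : ∀ t ∈ N.T, w t ≤ 1) (a : S) :
    N.reachVal w a ≤ 1 := by
  refine ciSup_le fun n => ?_
  have hPn := pow_mem N.P_mem_rowStochastic n
  calc ∑ t ∈ N.T, (N.P ^ n) a t * w t ≤ ∑ t ∈ N.T, (N.P ^ n) a t :=
        sum_le_sum fun t ht => mul_le_of_le_one_right (nonneg_of_mem_rowStochastic hPn) (hw1 t ht)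
    _ ≤ ∑ t, (N.P ^ n) a t :=
        sum_le_sum_of_subset_of_nonneg (subset_univ _) fun _ _ _ => nonneg_of_mem_rowStochastic hPn
    _ = 1 := sum_row_of_mem_rowStochastic hPn a

/-- Mass that has reached a target of weight `0` is lost for good. -/
theorem reachVal_le_one_sub_P_pow_apply (hw0 : ∀ t ∈ N.T, 0 ≤ w t)
    (hw1 : ∀ t ∈ N.T, w t ≤ 1) {t : S} (ht : t ∈ N.T) (hwt : w t = 0) (m : ℕ) (a : S) :
    N.reachVal w a ≤ 1 - (N.P ^ m) a t := by
  refine ciSup_le fun n => ?_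
  have hPk := pow_mem N.P_mem_rowStochastic (max n m)
  calc N.reachValTrunc w n a ≤ N.reachValTrunc w (max n m) a :=
        monotone_reachValTrunc hw0 a (le_max_left n m)
    _ = ∑ b ∈ N.T.erase t, (N.P ^ max n m) a b * w b := by
        rw [reachValTrunc, sum_erase _ (by rw [hwt, mul_zero])]
    _ ≤ ∑ b ∈ univ.erase t, (N.P ^ max n m) a b :=
        (sum_le_sum fun b hb => mul_le_of_le_one_right (nonneg_of_mem_rowStochastic hPk)
          (hw1 b (mem_of_mem_erase hb))).trans
        (sum_le_sum_of_subset_of_nonneg (erase_subset_erase t (subset_univ _))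
          fun _ _ _ => nonneg_of_mem_rowStochastic hPk)
    _ = 1 - (N.P ^ max n m) a t := by
        rw [sum_erase_eq_sub (mem_univ t), sum_row_of_mem_rowStochastic hPk a]
    _ ≤ 1 - (N.P ^ m) a t :=
        sub_le_sub_left (N.monotone_P_pow_apply_of_mem_T ht a (le_max_right n m)) 1

theorem eq_of_edge_of_le_sum {φ : S → ℝ} {x y : S} (hx : φ x ≤ ∑ b, N.δ x b * φ b)
    (hmax : ∀ b, φ b ≤ φ x) (hxy : N.edge x y) : φ y = φ x := by
  have hterm_nonneg : ∀ b ∈ univ, 0 ≤ N.δ x b * (φ x - φ b) := fun b _ =>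
    mul_nonneg (N.nonneg x b) (sub_nonneg.2 (hmax b))
  have hsum : ∑ b, N.δ x b * (φ x - φ b) = φ x - ∑ b, N.δ x b * φ b := by
    simp only [mul_sub, sum_sub_distrib, ← sum_mul, N.rowsum, one_mul]
  have hzero := (sum_eq_zero_iff_of_nonneg hterm_nonneg).1
    (le_antisymm (by linarith) (sum_nonneg hterm_nonneg)) y (mem_univ y)
  rcases mul_eq_zero.1 hzero with hδ | hφ
  · exact absurd hδ hxy.ne'
  · linarith

/-- Maximum principle: the maximum of a function subharmonic off `T` propagates along edges,
hence is attained on `T`. -/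
theorem nonpos_of_le_sum (hreach : ∀ a, reaches N.edge (N.T : Set S) a) {φ : S → ℝ}
    (hsub : ∀ a ∉ N.T, φ a ≤ ∑ b, N.δ a b * φ b) (hT : ∀ t ∈ N.T, φ t ≤ 0)
    (a : S) : φ a ≤ 0 := by
  have : Nonempty S := ⟨a⟩
  obtain ⟨x, hx⟩ := Finite.exists_max φ
  by_contra! hpos
  have hmax_pos : 0 < φ x := hpos.trans_le (hx a)
  have hprop : ∀ n y z, pathLen N.edge n y z → φ y = φ x → φ z = φ x := by
    intro n
    induction n with
    | zero => rintro y z rfl hy; exact hy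
    | succ n ih =>
      rintro y z ⟨b, hyb, hbz⟩ hy
      have hyT : y ∉ N.T := fun hyT => by linarith [hT y hyT]
      exact ih b z hbz ((eq_of_edge_of_le_sum (hsub y hyT) (fun b => hy ▸ hx b) hyb).trans hy)
  obtain ⟨n, t, ht, hxt⟩ := hreach x
  linarith [hT t ht, hprop n x t hxt rfl]

theorem le_reachVal (hreach : ∀ a, reaches N.edge (N.T : Set S) a) (hw : ∀ t ∈ N.T, 0 ≤ w t)
    {g : S → ℝ} (hT : ∀ t ∈ N.T, g t ≤ w t)
    (hsub : ∀ a ∉ N.T, g a ≤ ∑ b, N.δ a b * g b) (a : S) : g a ≤ N.reachVal w a := by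
  have key := nonpos_of_le_sum hreach (φ := fun b => g b - N.reachVal w b) (fun b hb => ?_)
    (fun t ht => ?_) a
  · linarith
  · simp only [mul_sub, sum_sub_distrib, ← reachVal_eq_sum hw]
    linarith [hsub b hb]
  · simp only [reachVal_of_mem_T w ht]
    linarith [hT t ht]

end Value

section Reduce

variable {M : MC S} {s : S}

theorem reduce_δ_of_ne {a : S} (ha : a ≠ s) (b : S) : (M.reduce s).δ a b = M.δ a b :=
  if_neg ha

theorem reachVal_reduce_eq_sum {w : S → ℝ} (hw : ∀ t ∈ (M.reduce s).T, 0 ≤ w t) {a : S}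
    (ha : a ≠ s) :
    (M.reduce s).reachVal w a = ∑ b, M.δ a b * (M.reduce s).reachVal w b := by
  rw [reachVal_eq_sum hw]
  simp only [reduce_δ_of_ne ha]

theorem hitProb_self : M.hitProb s s = 1 := by
  simp [hitProb, reachVal_of_mem_T (N := M.reduce s) _ (mem_insert_self s M.T)]

theorem hitProb_of_mem_T {t : S} (ht : t ∈ M.T) (hts : t ≠ s) : M.hitProb t s = 0 := by
  simp [hitProb, reachVal_of_mem_T (N := M.reduce s) _ (mem_insert_of_mem ht), hts]

theorem hitProb_le_one (a : S) : M.hitProb a s ≤ 1 :=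
  reachVal_le_one (fun t _ => by split_ifs <;> norm_num) a

theorem hitProb_eq_sum {a : S} (ha : a ≠ s) : M.hitProb a s = ∑ b, M.δ a b * M.hitProb b s :=
  reachVal_reduce_eq_sum (fun t _ => by split_ifs <;> norm_num) ha

theorem hitProb_le_one_sub_pmin_pow {a : S} (ha : reaches M.edge (M.T : Set S) a)
    (hlt : distTo M.edge M.T a < distTo M.edge M.T s) :
    M.hitProb a s ≤ 1 - M.pmin ^ distTo M.edge M.T a := by
  obtain ⟨t, ht, hat⟩ := ha.exists_pathLen_avoiding hlt
  have hts : t ≠ s := by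
    rintro rfl
    have := distTo_le_of_pathLen ht (show pathLen M.edge 0 t t from rfl)
    omega
  have hpath := (M.reduce s).pow_le_P_pow_apply_of_pathLen M.pmin_nonneg
    (fun x y ⟨hxy, hx⟩ => (reduce_δ_of_ne hx y).symm ▸ M.pmin_le hxy) hat
  have hlost := reachVal_le_one_sub_P_pow_apply (N := M.reduce s)
    (w := fun b => if b = s then 1 else 0)
    (fun t _ => by split_ifs <;> norm_num) (fun t _ => by split_ifs <;> norm_num)
    (mem_insert_of_mem ht) (if_neg hts) (distTo M.edge M.T a) a
  exact hlost.trans (sub_le_sub_left hpath 1)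

variable (M s) in
noncomputable def escapeProb : ℝ :=
  ∑ b, M.δ s b * (1 - M.hitProb b s)

theorem sum_δ_mul_hitProb : ∑ b, M.δ s b * M.hitProb b s = 1 - M.escapeProb s := by
  simp only [escapeProb, mul_sub, mul_one, sum_sub_distrib, M.rowsum]
  ring

theorem pmin_pow_card_le_escapeProb (hreach : ∀ a, reaches M.edge (M.T : Set S) a)
    (hs : s ∉ M.T) : M.pmin ^ Fintype.card S ≤ M.escapeProb s := by
  have hD : distTo M.edge M.T s ≠ 0 := fun h0 => hs ((hreach s).mem_of_distTo_eq_zero h0)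
  obtain ⟨a, hsa, ha, hdist⟩ := (hreach s).exists_rel_distTo_add_one hD
  have hhit := hitProb_le_one_sub_pmin_pow (s := s) ha (by omega)
  have hcard := (hreach s).distTo_lt_card
  calc M.pmin ^ Fintype.card S ≤ M.pmin ^ (distTo M.edge M.T a + 1) :=
        pow_le_pow_of_le_one M.pmin_nonneg ((M.pmin_le hsa).trans (M.δ_le_one s a)) (by omega)
    _ = M.pmin * M.pmin ^ distTo M.edge M.T a := pow_succ' _ _
    _ ≤ M.δ s a * (1 - M.hitProb a s) :=
        mul_le_mul (M.pmin_le hsa) (by linarith) (pow_nonneg M.pmin_nonneg _) (M.nonneg s a)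
    _ ≤ M.escapeProb s :=
        single_le_sum (f := fun b => M.δ s b * (1 - M.hitProb b s))
          (fun b _ => mul_nonneg (M.nonneg s b) (sub_nonneg.2 (hitProb_le_one b))) (mem_univ a)

variable {w : S → ℝ} {γ : ℝ}

theorem sub_le_reachVal_of_le_add_mul_escapeProb (hreach : ∀ a, reaches M.edge (M.T : Set S) a)
    (hw : ∀ t ∈ M.T, 0 ≤ w t) (hs : s ∉ M.T) (hγ : 0 ≤ γ) {c : ℝ}
    (hc : γ ≤ ∑ b, M.δ s b * (M.reduce s).reachVal (Function.update w s γ) b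
      + c * M.escapeProb s) :
    γ - c ≤ M.reachVal w s := by
  set u := (M.reduce s).reachVal (Function.update w s γ)
  have hwu : ∀ t ∈ (M.reduce s).T, 0 ≤ Function.update w s γ t := by
    intro t ht
    rcases eq_or_ne t s with rfl | hts
    · simpa using hγ
    · simpa [hts] using hw t ((mem_insert.1 ht).resolve_left hts)
  have hu_s : u s = γ := by
    simp [u, reachVal_of_mem_T (N := M.reduce s) _ (mem_insert_self s M.T)]
  have hsplit : ∀ a, ∑ b, M.δ a b * (u b - c * M.hitProb b s)
      = ∑ b, M.δ a b * u b - c * ∑ b, M.δ a b * M.hitProb b s := fun a => by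
    simp only [mul_sub, sum_sub_distrib, mul_sum, mul_left_comm c]
  have key := le_reachVal hreach hw (g := fun b => u b - c * M.hitProb b s) (fun t ht => ?_)
    (fun a ha => ?_) s
  · simpa [hu_s, hitProb_self] using key
  · have hts : t ≠ s := by rintro rfl; exact hs ht
    simp [u, reachVal_of_mem_T (N := M.reduce s) _ (mem_insert_of_mem ht), hts,
      hitProb_of_mem_T ht hts]
  · rw [hsplit]
    rcases eq_or_ne a s with rfl | has
    · rw [hu_s, hitProb_self, sum_δ_mul_hitProb]
      linarith
    · rw [← reachVal_reduce_eq_sum hwu has, ← hitProb_eq_sum has]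

end Reduce

end MC

theorem stmt_6_general {S : Type} [Fintype S] [DecidableEq S] [Nonempty S]
    (M : MC S) (hreach : ∀ a : S, reaches M.edge (M.T : Set S) a)
    (w : S → ℝ) (hw : ∀ t ∈ M.T, 0 ≤ w t)
    (s : S) (hs : s ∉ M.T) (γ : ℝ) (hγ : 0 ≤ γ)
    (f : S → ℝ)
    (hf : ∀ a : S, f a ≤ (M.reduce s).reachVal (Function.update w s γ) a)
    (ε : ℝ) (hε : 0 < ε)
    (h : γ < (∑ s' : S, M.δ s s' * f s') + M.pmin ^ (Fintype.card S) * ε) :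
    γ - ε < M.reachVal w s := by
  have hesc := M.pmin_pow_card_le_escapeProb hreach hs
  have hesc_pos : 0 < M.escapeProb s := (pow_pos M.pmin_pos _).trans_le hesc
  have hf_avg : ∑ s', M.δ s s' * f s'
      ≤ ∑ b, M.δ s b * (M.reduce s).reachVal (Function.update w s γ) b :=
    sum_le_sum fun b _ => mul_le_mul_of_nonneg_left (hf b) (M.nonneg s b)
  set c := (γ - ∑ s', M.δ s s' * f s') / M.escapeProb s
  have hval : γ - c ≤ M.reachVal w s :=
    MC.sub_le_reachVal_of_le_add_mul_escapeProb hreach hw hs hγ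
      (by rw [div_mul_cancel₀ _ hesc_pos.ne']; linarith)
  have hc : c < ε := by
    rw [div_lt_iff₀ hesc_pos]
    nlinarith
  linarith

/-- Approximate verification of a guess (lower bound): with `n = |S|`,
if `f` is a pointwise lower bound on the value vector of the reduced Markov chain
`M[s = γ]`, `γ' = ∑_{s'} δ(s,s')·f(s')`, `ε > 0`, `γ - ε ≥ 0`, and
`γ' + p_min^n·ε > γ`, then `val_M(s) > γ - ε`. -/
theorem stmt_6 {S : Type} [Fintype S] [DecidableEq S] [Nonempty S]
    (M : MC S) (hreach : ∀ a : S, reaches M.edge (M.T : Set S) a)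
    (w : S → ℝ) (hw : ∀ t ∈ M.T, 0 ≤ w t)
    (s : S) (hs : s ∉ M.T) (γ : ℝ) (hγ : 0 ≤ γ)
    (f : S → ℝ)
    (hf : ∀ a : S, f a ≤ (M.reduce s).reachVal (Function.update w s γ) a)
    (ε : ℝ) (hε : 0 < ε) (hγε : 0 ≤ γ - ε)
    (h : γ < (∑ s' : S, M.δ s s' * f s') + M.pmin ^ (Fintype.card S) * ε) :
    γ - ε < M.reachVal w s :=
  stmt_6_general M hreach w hw s hs γ hγ f hf ε hε h
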